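/- Let $(Y'_t)_{t\in\mathbb{N}}$ be square-integrable $\mathbb{R}^p$-valued random vectors on a probability space, let $c_0 \in \mathbb{R}^p$ be a constant, and for $t \ge 1$ let $c_t = f_t(Y_0,\ldots,Y_{t-1})$ where $f_t : (\mathbb{R}^p)^t \to \mathbb{R}^p$ is a Borel-measurable function and $Y_t := Y'_t + c_t$ (with $Y_0 := Y'_0 + c_0$). Then for every $t$: (i) $\sigma(Y_0,\ldots,Y_t) = \sigma(Y'_0,\ldots,Y'_t)$, and (ii) the innovations coincide almost surely: $Y_t - \mathsf{E}[Y_t \mid \sigma(Y_0,\ldots,Y_{t-1})] = Y'_t - \mathsf{E}[Y'_t \mid \sigma(Y'_0,\ldots,Y'_{t-1})]$ for $t \ge 1$, and $Y_0 - \mathsf{E}[Y_0] = Y'_0 - \mathsf{E}[Y'_0]$. (This is the key step showing that the innovation process of a controlled linear system does not depend on the control history, since the control contribution to the output is a measurable function of past outputs.) -/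

import Mathlib

/-!
The shift `Yₜ - Y'ₜ` is a measurable function of `Y₀, …, Yₜ₋₁`. Hence, inductively, adjoining `Yₜ`
or `Y'ₜ` to the common past `σ(Y₀, …, Yₜ₋₁) = σ(Y'₀, …, Y'ₜ₋₁)` gives the same σ-algebra, and
conditioning on that past leaves the shift unchanged, so it cancels in the innovation.
-/

open MeasureTheory

namespace MeasureTheory

variable {Ω E : Type*} {m₀ : MeasurableSpace Ω}

section Past

variable [MeasurableSpace E]

abbrev pastSigma (X : ℕ → Ω → E) (t : ℕ) : MeasurableSpace Ω :=
  ⨆ i : Fin t, MeasurableSpace.comap (X i) inferInstance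

lemma measurable_pastSigma (X : ℕ → Ω → E) {t : ℕ} (i : Fin t) :
    Measurable[pastSigma X t] (X i) :=
  measurable_iff_comap_le.mpr (le_iSup (fun j : Fin t => MeasurableSpace.comap (X j) _) i)

lemma measurable_pastSigma_pi (X : ℕ → Ω → E) (t : ℕ) :
    Measurable[pastSigma X t] (fun ω (i : Fin t) => X i ω) :=
  @measurable_pi_lambda Ω (Fin t) _ (pastSigma X t) _ _ (measurable_pastSigma X)

lemma pastSigma_le (X : ℕ → Ω → E) (hX : ∀ t, Measurable[m₀] (X t)) (t : ℕ) :
    pastSigma X t ≤ m₀ :=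
  iSup_le fun i => (hX i).comap_le

lemma pastSigma_zero (X : ℕ → Ω → E) : pastSigma X 0 = ⊥ :=
  iSup_of_empty _

lemma pastSigma_succ (X : ℕ → Ω → E) (t : ℕ) :
    pastSigma X (t + 1) = pastSigma X t ⊔ MeasurableSpace.comap (X t) inferInstance := by
  apply le_antisymm
  · refine iSup_le fun i => Fin.lastCases le_sup_right (fun j => ?_) i
    exact le_sup_of_le_left (le_iSup (fun j : Fin t => MeasurableSpace.comap (X j) _) j)
  · refine sup_le (iSup_le fun j => ?_) ?_
    · exact le_iSup (fun i : Fin (t + 1) => MeasurableSpace.comap (X i) _) j.castSucc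
    · exact le_iSup (fun i : Fin (t + 1) => MeasurableSpace.comap (X i) _) (Fin.last t)

variable [AddCommGroup E] [MeasurableAdd₂ E] [MeasurableSub₂ E]

lemma sup_comap_eq_of_measurable_sub {m : MeasurableSpace Ω} {f g : Ω → E}
    (h : Measurable[m] (f - g)) :
    m ⊔ MeasurableSpace.comap f inferInstance = m ⊔ MeasurableSpace.comap g inferInstance := by
  have hf : Measurable[MeasurableSpace.comap f inferInstance] f := comap_measurable f
  have hg : Measurable[MeasurableSpace.comap g inferInstance] g := comap_measurable g
  apply le_antisymm <;> refine sup_le le_sup_left (measurable_iff_comap_le.mp ?_)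
  · have hfg : f = g + (f - g) := (add_sub_cancel g f).symm
    rw [hfg]
    exact (hg.mono le_sup_right le_rfl).add (h.mono le_sup_left le_rfl)
  · have hgf : g = f - (f - g) := (sub_sub_cancel f g).symm
    rw [hgf]
    exact (hf.mono le_sup_right le_rfl).sub (h.mono le_sup_left le_rfl)

lemma pastSigma_eq_of_measurable_sub (X Z : ℕ → Ω → E)
    (hXZ : ∀ t, Measurable[pastSigma X t] (X t - Z t)) (t : ℕ) :
    pastSigma X t = pastSigma Z t := by
  induction t with
  | zero => rw [pastSigma_zero, pastSigma_zero]
  | succ t ih =>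
    rw [pastSigma_succ, pastSigma_succ, sup_comap_eq_of_measurable_sub (hXZ t), ih]

end Past

section CondExp

variable [NormedAddCommGroup E] [NormedSpace ℝ E] [CompleteSpace E] {μ : Measure[m₀] Ω}

lemma sub_condExp_eq_of_stronglyMeasurable_sub {m : MeasurableSpace Ω} (hm : m ≤ m₀)
    [SigmaFinite (μ.trim hm)] {f g : Ω → E} (hf : Integrable f μ) (hg : Integrable g μ)
    (hfg : StronglyMeasurable[m] (f - g)) :
    f - μ[f | m] =ᵐ[μ] g - μ[g | m] := by
  have hcond : f - g =ᵐ[μ] μ[f | m] - μ[g | m] := by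
    rw [← condExp_of_stronglyMeasurable hm hfg (hf.sub hg)]
    exact condExp_sub hf hg m
  filter_upwards [hcond] with ω hω
  simp only [Pi.sub_apply] at hω ⊢
  rw [sub_eq_sub_iff_sub_eq_sub, hω]

lemma sub_integral_add_const [IsProbabilityMeasure μ] {f : Ω → E} (hf : Integrable f μ) (c : E) :
    (fun ω => f ω + c - ∫ ω', f ω' + c ∂μ) = fun ω => f ω - ∫ ω', f ω' ∂μ := by
  funext ω
  rw [integral_add hf (integrable_const c), integral_const, probReal_univ, one_smul,
    add_sub_add_right_eq_sub]

end CondExp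

end MeasureTheory

/-- Shifting a process by a (measurable) function of its own past does not change the
generated sigma-algebras nor the innovations. -/
theorem innovations_invariant_under_past_measurable_shift
    {Ω : Type*} [MeasurableSpace Ω] (μ : Measure Ω) [IsProbabilityMeasure μ]
    {p : ℕ} (Y' Y : ℕ → Ω → (Fin p → ℝ))
    (hY'meas : ∀ t, Measurable (Y' t))
    (hY'2 : ∀ t, MemLp (Y' t) 2 μ)
    (hY2 : ∀ t, MemLp (Y t) 2 μ)
    (c0 : Fin p → ℝ)
    (f : (t : ℕ) → (Fin t → (Fin p → ℝ)) → (Fin p → ℝ))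
    (hf : ∀ t, Measurable (f t))
    (hY0 : Y 0 = fun ω => Y' 0 ω + c0)
    (hYt : ∀ t : ℕ,
      Y (t + 1) = fun ω => Y' (t + 1) ω + f (t + 1) (fun i : Fin (t + 1) => Y i ω)) :
    (∀ t : ℕ,
      (⨆ i : Fin (t + 1), MeasurableSpace.comap (Y i) inferInstance)
        = (⨆ i : Fin (t + 1), MeasurableSpace.comap (Y' i) inferInstance))
    ∧ (∀ t : ℕ,
      (fun ω => Y (t + 1) ω
          - (μ[Y (t + 1) | ⨆ i : Fin (t + 1), MeasurableSpace.comap (Y i) inferInstance]) ω)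
        =ᵐ[μ]
      (fun ω => Y' (t + 1) ω
          - (μ[Y' (t + 1) | ⨆ i : Fin (t + 1), MeasurableSpace.comap (Y' i) inferInstance]) ω))
    ∧ ((fun ω => Y 0 ω - ∫ ω', Y 0 ω' ∂μ) =ᵐ[μ] fun ω => Y' 0 ω - ∫ ω', Y' 0 ω' ∂μ) := by
  have hshift : ∀ t, Measurable[pastSigma Y t] (Y t - Y' t) := by
    rintro (_ | t)
    · have hc : Y 0 - Y' 0 = fun _ => c0 := by funext ω; simp [hY0]
      exact hc ▸ measurable_const
    · have hc : Y (t + 1) - Y' (t + 1) = fun ω => f (t + 1) (fun i : Fin (t + 1) => Y i ω) := by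
        funext ω; simp [hYt t]
      exact hc ▸ (hf (t + 1)).comp (measurable_pastSigma_pi Y (t + 1))
  have hpast : ∀ t, pastSigma Y t = pastSigma Y' t := pastSigma_eq_of_measurable_sub Y Y' hshift
  refine ⟨fun t => hpast (t + 1), fun t => ?_, ?_⟩
  · have hm : pastSigma Y (t + 1) ≤ _ := hpast (t + 1) ▸ pastSigma_le Y' hY'meas (t + 1)
    have h := sub_condExp_eq_of_stronglyMeasurable_sub hm ((hY2 _).integrable one_le_two)
      ((hY'2 _).integrable one_le_two) (hshift (t + 1)).stronglyMeasurable
    show Y (t + 1) - μ[Y (t + 1) | pastSigma Y (t + 1)]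
      =ᵐ[μ] Y' (t + 1) - μ[Y' (t + 1) | pastSigma Y' (t + 1)]
    rwa [← hpast (t + 1)]
  · rw [hY0, sub_integral_add_const ((hY'2 0).integrable one_le_two)]
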